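/- arXiv:2405.09339 — 7 statements merged into one kernel-verified Lean document; each statement's English description precedes it below -/
import Mathlib

section
/- Let β > 0, T > 0, and let τ : [0,T] → ℝ be continuously differentiable with τ(t) > 0 and τ'(t) ≥ 1 for all t. Define a(t) = (1/(β σ²)) · τ(t)(T−t)/(τ(t)+(T−t)) for a constant σ > 0. Then a solves the Riccati-type ODE (1/2)a'(t) + (β/(2σ²))·(1/β − σ²·a(t)/τ(t))² − (β σ²/2)·(−1/τ)'(t)·a(t)² = 0 with terminal condition a(T) = 0. -/
/-!
Up to the factor `1/(βσ²)`, `a` is the parallel sum `h = τs/(τ+s)` of the clock `τ` and the time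
to maturity `s = T − t`. The quotient rule gives `h' = (τ's² − τ²)/(τ+s)²`, while
`1 − h/τ = τ/(τ+s)`; after multiplication by `2βσ²` the ODE becomes the identity
`h' + (1 − h/τ)² − (τ'/τ²)h² = 0`.
-/

theorem HasDerivAt.mul_div_add {𝕜 : Type*} [NontriviallyNormedField 𝕜] {f g : 𝕜 → 𝕜}
    {f' g' x : 𝕜} (hf : HasDerivAt f f' x) (hg : HasDerivAt g g' x) (h : f x + g x ≠ 0) :
    HasDerivAt (fun y => f y * g y / (f y + g y))
      ((f' * g x ^ 2 + g' * f x ^ 2) / (f x + g x) ^ 2) x :=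
  ((hf.fun_mul hg).fun_div (hf.fun_add hg) h).congr_deriv (by ring)

theorem hasDerivAt_mul_sub_div_add_sub {τ : ℝ → ℝ} {τ' t : ℝ} (T : ℝ) (hτ : HasDerivAt τ τ' t)
    (h : τ t + (T - t) ≠ 0) :
    HasDerivAt (fun y => τ y * (T - y) / (τ y + (T - y)))
      ((τ' * (T - t) ^ 2 - τ t ^ 2) / (τ t + (T - t)) ^ 2) t :=
  (hτ.mul_div_add ((hasDerivAt_id' t).const_sub T) h).congr_deriv (by ring)

theorem parallel_sum_riccati {τ s τ' : ℝ} (hτ : τ ≠ 0) (h : τ + s ≠ 0) :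
    (τ' * s ^ 2 - τ ^ 2) / (τ + s) ^ 2 + (1 - τ * s / (τ + s) / τ) ^ 2
      - τ' / τ ^ 2 * (τ * s / (τ + s)) ^ 2 = 0 := by
  field_simp
  ring

theorem cara_riccati_of_normalized {β σ τ τ' h h' : ℝ} (hβ : β ≠ 0) (hσ : σ ≠ 0)
    (H : h' + (1 - h / τ) ^ 2 - τ' / τ ^ 2 * h ^ 2 = 0) :
    (1 / 2) * (1 / (β * σ ^ 2) * h')
      + (β / (2 * σ ^ 2)) * (1 / β - σ ^ 2 * (1 / (β * σ ^ 2) * h) / τ) ^ 2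
      - (β * σ ^ 2 / 2) * (τ' / τ ^ 2) * (1 / (β * σ ^ 2) * h) ^ 2 = 0 := by
  have hscale : (1 / 2) * (1 / (β * σ ^ 2) * h')
      + (β / (2 * σ ^ 2)) * (1 / β - σ ^ 2 * (1 / (β * σ ^ 2) * h) / τ) ^ 2
      - (β * σ ^ 2 / 2) * (τ' / τ ^ 2) * (1 / (β * σ ^ 2) * h) ^ 2
      = (h' + (1 - h / τ) ^ 2 - τ' / τ ^ 2 * h ^ 2) / (2 * β * σ ^ 2) := by
    field_simp
  rw [hscale, H, zero_div]

theorem stmt1_general (β σ T : ℝ) (hβ : 0 < β) (hσ : 0 < σ)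
    (τ τ' : ℝ → ℝ)
    (hτdiff : ∀ t ∈ Set.Icc (0 : ℝ) T, HasDerivAt τ (τ' t) t)
    (hτpos : ∀ t ∈ Set.Icc (0 : ℝ) T, 0 < τ t)
    (a : ℝ → ℝ)
    (ha : a = fun t => (1 / (β * σ ^ 2)) * (τ t * (T - t) / (τ t + (T - t)))) :
    a T = 0 ∧ ∀ t ∈ Set.Icc (0 : ℝ) T, ∃ a' : ℝ, HasDerivAt a a' t ∧
      (1 / 2) * a' + (β / (2 * σ ^ 2)) * (1 / β - σ ^ 2 * a t / τ t) ^ 2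
        - (β * σ ^ 2 / 2) * (τ' t / τ t ^ 2) * a t ^ 2 = 0 := by
  subst ha
  refine ⟨by simp, fun t ht => ?_⟩
  have hτt := hτpos t ht
  have hsum : τ t + (T - t) ≠ 0 := by
    have := sub_nonneg.2 ht.2
    positivity
  exact ⟨_, (hasDerivAt_mul_sub_div_add_sub T (hτdiff t ht) hsum).const_mul _,
    cara_riccati_of_normalized hβ.ne' hσ.ne' (parallel_sum_riccati hτt.ne' hsum)⟩

/-- The CARA value-function coefficient `a(t) = (1/(βσ²)) τ(t)(T−t)/(τ(t)+(T−t))` solves the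
Riccati-type ODE `(1/2)a' + (β/(2σ²))(1/β − σ²a/τ)² − (βσ²/2)(τ'/τ²)a² = 0`, `a(T) = 0`. -/
theorem stmt1 (β σ T : ℝ) (hβ : 0 < β) (hσ : 0 < σ) (hT : 0 < T)
    (τ τ' : ℝ → ℝ)
    (hτdiff : ∀ t ∈ Set.Icc (0 : ℝ) T, HasDerivAt τ (τ' t) t)
    (hτ'cont : ContinuousOn τ' (Set.Icc 0 T))
    (hτpos : ∀ t ∈ Set.Icc (0 : ℝ) T, 0 < τ t)
    (hτ' : ∀ t ∈ Set.Icc (0 : ℝ) T, 1 ≤ τ' t)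
    (a : ℝ → ℝ)
    (ha : a = fun t => (1 / (β * σ ^ 2)) * (τ t * (T - t) / (τ t + (T - t)))) :
    a T = 0 ∧ ∀ t ∈ Set.Icc (0 : ℝ) T, ∃ a' : ℝ, HasDerivAt a a' t ∧
      (1 / 2) * a' + (β / (2 * σ ^ 2)) * (1 / β - σ ^ 2 * a t / τ t) ^ 2
        - (β * σ ^ 2 / 2) * (τ' t / τ t ^ 2) * a t ^ 2 = 0 :=
  stmt1_general β σ T hβ hσ τ τ' hτdiff hτpos a ha
end

section
/- Let T > 0, t₀ > 0. Let τ¹, τ² : [0,T] → ℝ be continuously differentiable, with τ¹(0) = τ²(0) = t₀, τ'ᵢ(t) ≥ 1, and τ¹(t) ≥ τ²(t) for all t ∈ [0,T]. Define c(τ) := (1/(2β)) ∫₀ᵀ τ'(s)(T−s) / (τ(s)(τ(s)+T−s)) ds for β > 0. Then c(τ¹) ≥ c(τ²). -/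
/-! Splitting the integrand as `τ'/τ - (τ' - 1)/(τ + T - s) - 1/(τ + T - s)`, the first two terms
are the derivative of `log τ(s) - log (τ(s) + T - s)`, which vanishes at `s = T` and equals
`log (t₀ / (t₀ + T))` at `s = 0`. Hence `c(τ)` is a constant depending only on `t₀` and `T`
minus `∫₀ᵀ 1/(τ(s) + T - s) ds`, and the latter integral decreases as `τ` increases. -/

open Set intervalIntegral

theorem add_sub_le_of_one_le_deriv {a b : ℝ} {τ τ' : ℝ → ℝ}
    (hderiv : ∀ t ∈ Icc a b, HasDerivAt τ (τ' t) t) (h' : ∀ t ∈ Icc a b, 1 ≤ τ' t)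
    {s : ℝ} (hs : s ∈ Icc a b) : τ a + (s - a) ≤ τ s := by
  have key := (convex_Icc a b).mul_sub_le_image_sub_of_le_deriv
    (fun t ht => (hderiv t ht).continuousAt.continuousWithinAt)
    (fun t ht => (hderiv t (interior_subset ht)).differentiableAt.differentiableWithinAt)
    (fun t ht => (h' t (interior_subset ht)).trans_eq (hderiv t (interior_subset ht)).deriv.symm)
    a (left_mem_Icc.2 (hs.1.trans hs.2)) s hs hs.1
  linarith

theorem integral_clock_integrand_eq {T : ℝ} (hT : 0 ≤ T) {τ τ' : ℝ → ℝ}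
    (hderiv : ∀ t ∈ Icc 0 T, HasDerivAt τ (τ' t) t) (hcont : ContinuousOn τ' (Icc 0 T))
    (hpos : ∀ t ∈ Icc 0 T, 0 < τ t) :
    ∫ s in (0 : ℝ)..T, τ' s * (T - s) / (τ s * (τ s + T - s)) =
      Real.log (τ 0 + T) - Real.log (τ 0) - ∫ s in (0 : ℝ)..T, 1 / (τ s + T - s) := by
  rw [← uIcc_of_le hT] at hderiv hcont hpos
  have hgap : ∀ s ∈ uIcc 0 T, 0 < τ s + T - s := fun s hs => by
    have := hpos s hs
    rw [uIcc_of_le hT] at hs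
    linarith [hs.2]
  have hτcont : ContinuousOn τ (uIcc 0 T) :=
    fun t ht => (hderiv t ht).continuousAt.continuousWithinAt
  have hgapcont : ContinuousOn (fun s => τ s + T - s) (uIcc 0 T) :=
    (hτcont.add continuousOn_const).sub continuousOn_id
  have hprimitive : ∀ s ∈ uIcc 0 T,
      HasDerivAt (fun s => Real.log (τ s) - Real.log (τ s + T - s))
        (τ' s / τ s - (τ' s - 1) / (τ s + T - s)) s := fun s hs =>
    ((hderiv s hs).log (hpos s hs).ne').sub
      ((((hderiv s hs).add_const T).sub (hasDerivAt_id s)).log (hgap s hs).ne')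
  have hderiv_int : IntervalIntegrable (fun s => τ' s / τ s - (τ' s - 1) / (τ s + T - s))
      MeasureTheory.volume 0 T :=
    ((hcont.div hτcont fun s hs => (hpos s hs).ne').sub
      ((hcont.sub continuousOn_const).div hgapcont fun s hs => (hgap s hs).ne')).intervalIntegrable
  have hrest_int : IntervalIntegrable (fun s => 1 / (τ s + T - s)) MeasureTheory.volume 0 T :=
    (continuousOn_const.div hgapcont fun s hs => (hgap s hs).ne').intervalIntegrable
  have hsplit : EqOn (fun s => τ' s * (T - s) / (τ s * (τ s + T - s)))
      (fun s => (τ' s / τ s - (τ' s - 1) / (τ s + T - s)) - 1 / (τ s + T - s)) (uIcc 0 T) := by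
    intro s hs
    have := (hpos s hs).ne'
    have := (hgap s hs).ne'
    field_simp
    ring
  rw [integral_congr hsplit, integral_sub hderiv_int hrest_int,
    integral_eq_sub_of_hasDerivAt hprimitive hderiv_int]
  simp only [sub_self, sub_zero, add_sub_cancel_right]
  ring

theorem integral_one_div_add_sub_le_of_le {T : ℝ} (hT : 0 ≤ T) {τ₁ τ₂ : ℝ → ℝ}
    (h₁ : ContinuousOn τ₁ (Icc 0 T)) (h₂ : ContinuousOn τ₂ (Icc 0 T))
    (hpos : ∀ t ∈ Icc 0 T, 0 < τ₂ t + T - t) (hle : ∀ t ∈ Icc 0 T, τ₂ t ≤ τ₁ t) :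
    ∫ s in (0 : ℝ)..T, 1 / (τ₁ s + T - s) ≤ ∫ s in (0 : ℝ)..T, 1 / (τ₂ s + T - s) := by
  have hpos₁ : ∀ t ∈ Icc 0 T, 0 < τ₁ t + T - t := fun t ht => by linarith [hpos t ht, hle t ht]
  have hint : ∀ τ : ℝ → ℝ, ContinuousOn τ (Icc 0 T) → (∀ t ∈ Icc 0 T, 0 < τ t + T - t) →
      IntervalIntegrable (fun s => 1 / (τ s + T - s)) MeasureTheory.volume 0 T :=
    fun τ hτ hτpos => ContinuousOn.intervalIntegrable <| by
      rw [uIcc_of_le hT]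
      exact continuousOn_const.div ((hτ.add continuousOn_const).sub continuousOn_id)
        fun t ht => (hτpos t ht).ne'
  exact integral_mono_on hT (hint τ₁ h₁ hpos₁) (hint τ₂ h₂ hpos) fun s hs =>
    one_div_le_one_div_of_le (hpos s hs) (by linarith [hle s hs])

/-- A larger informative clock gives a larger CARA value-function constant term:
if `τ¹ ≥ τ²` pointwise then `c(τ¹) ≥ c(τ²)`. -/
theorem stmt5 (T t₀ β : ℝ) (hT : 0 < T) (ht₀ : 0 < t₀) (hβ : 0 < β)
    (τ₁ τ₁' τ₂ τ₂' : ℝ → ℝ)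
    (h₁diff : ∀ t ∈ Set.Icc (0 : ℝ) T, HasDerivAt τ₁ (τ₁' t) t)
    (h₂diff : ∀ t ∈ Set.Icc (0 : ℝ) T, HasDerivAt τ₂ (τ₂' t) t)
    (h₁cont : ContinuousOn τ₁' (Set.Icc 0 T))
    (h₂cont : ContinuousOn τ₂' (Set.Icc 0 T))
    (h₁0 : τ₁ 0 = t₀) (h₂0 : τ₂ 0 = t₀)
    (h₁' : ∀ t ∈ Set.Icc (0 : ℝ) T, 1 ≤ τ₁' t)
    (h₂' : ∀ t ∈ Set.Icc (0 : ℝ) T, 1 ≤ τ₂' t)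
    (hle : ∀ t ∈ Set.Icc (0 : ℝ) T, τ₂ t ≤ τ₁ t) :
    (1 / (2 * β)) * ∫ s in (0 : ℝ)..T, τ₂' s * (T - s) / (τ₂ s * (τ₂ s + T - s)) ≤
      (1 / (2 * β)) * ∫ s in (0 : ℝ)..T, τ₁' s * (T - s) / (τ₁ s * (τ₁ s + T - s)) := by
  have hpos₁ : ∀ t ∈ Icc 0 T, 0 < τ₁ t := fun t ht => by
    linarith [add_sub_le_of_one_le_deriv h₁diff h₁' ht, ht.1]
  have hpos₂ : ∀ t ∈ Icc 0 T, 0 < τ₂ t := fun t ht => by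
    linarith [add_sub_le_of_one_le_deriv h₂diff h₂' ht, ht.1]
  have hcomp := integral_one_div_add_sub_le_of_le hT.le
    (fun t ht => (h₁diff t ht).continuousAt.continuousWithinAt)
    (fun t ht => (h₂diff t ht).continuousAt.continuousWithinAt)
    (fun t ht => by linarith [hpos₂ t ht, ht.2]) hle
  rw [integral_clock_integrand_eq hT.le h₁diff h₁cont hpos₁,
    integral_clock_integrand_eq hT.le h₂diff h₂cont hpos₂, h₁0, h₂0]
  gcongr
end

section
/- Let T > 0, t₀ > 0, 0 < γ < 1 with t₀/T > (1−γ)/γ, and let τ¹, τ² : [0,T] → ℝ be continuously differentiable with τⁱ(0) = t₀, (τⁱ)'(t) ≥ 1, and τ¹(t) ≥ τ²(t) for all t. Define c(τ) := (1/(2γ)) ∫₀ᵀ τ'(s)·((1−γ)/γ)(T−s) / (τ(s)·(τ(s) − ((1−γ)/γ)(T−s))) ds. Then c(τ¹) ≥ c(τ²). -/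
/-!
With `a = (1 - γ)/γ` and `d(s) = τ(s) - a (T - s)`, the integrand splits into partial fractions as
`τ' a (T - s) / (τ d) = (log d - log τ)' - a / d`, so that
`c(τ) = (1/(2γ)) (log t₀ - log (t₀ - a T) - ∫₀ᵀ a / d)`.
The boundary term depends only on `τ(0) = t₀`, and `a / d` decreases as `τ` increases.
-/

open Set

theorem Convex.sub_le_image_sub_of_one_le_hasDerivAt {D : Set ℝ} (hD : Convex ℝ D)
    {τ τ' : ℝ → ℝ} (hτ : ∀ x ∈ D, HasDerivAt τ (τ' x) x) (h1 : ∀ x ∈ D, 1 ≤ τ' x)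
    {x y : ℝ} (hx : x ∈ D) (hy : y ∈ D) (hxy : x ≤ y) : y - x ≤ τ y - τ x := by
  have hderiv : ∀ z ∈ interior D, HasDerivAt τ (τ' z) z := fun z hz => hτ z (interior_subset hz)
  simpa only [one_mul] using hD.mul_sub_le_image_sub_of_le_deriv (C := 1)
    (HasDerivAt.continuousOn hτ) (fun z hz => (hderiv z hz).differentiableAt.differentiableWithinAt)
    (fun z hz => (hderiv z hz).deriv ▸ h1 z (interior_subset hz)) x hx y hy hxy

theorem integral_const_div_le_integral_const_div {a b c : ℝ} (hab : a ≤ b) (hc : 0 ≤ c)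
    {g₁ g₂ : ℝ → ℝ} (h₁ : ContinuousOn g₁ (Icc a b)) (h₂ : ContinuousOn g₂ (Icc a b))
    (hpos : ∀ x ∈ Icc a b, 0 < g₂ x) (hle : ∀ x ∈ Icc a b, g₂ x ≤ g₁ x) :
    ∫ x in a..b, c / g₁ x ≤ ∫ x in a..b, c / g₂ x := by
  have hpos₁ : ∀ x ∈ Icc a b, 0 < g₁ x := fun x hx => (hpos x hx).trans_le (hle x hx)
  refine intervalIntegral.integral_mono_on hab ?_ ?_ fun x hx =>
    div_le_div_of_nonneg_left hc (hpos x hx) (hle x hx)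
  · exact (continuousOn_const.div h₁ fun x hx => (hpos₁ x hx).ne').intervalIntegrable_of_Icc hab
  · exact (continuousOn_const.div h₂ fun x hx => (hpos x hx).ne').intervalIntegrable_of_Icc hab

section Clock

variable {T a : ℝ} {τ τ' : ℝ → ℝ}

theorem clock_integrand_eq_partial_fractions {s : ℝ} (hτ : τ s ≠ 0) (hd : τ s - a * (T - s) ≠ 0) :
    τ' s * (a * (T - s)) / (τ s * (τ s - a * (T - s))) =
      ((τ' s + a) / (τ s - a * (T - s)) - τ' s / τ s) - a / (τ s - a * (T - s)) := by
  field_simp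
  ring

theorem hasDerivAt_log_clock_sub_log {s : ℝ} (hτs : HasDerivAt τ (τ' s) s) (hτ : τ s ≠ 0)
    (hd : τ s - a * (T - s) ≠ 0) :
    HasDerivAt (fun x => Real.log (τ x - a * (T - x)) - Real.log (τ x))
      ((τ' s + a) / (τ s - a * (T - s)) - τ' s / τ s) s := by
  have hdiff : HasDerivAt (fun x => τ x - a * (T - x)) (τ' s + a) s := by
    simpa using hτs.fun_sub (((hasDerivAt_id s).const_sub T).const_mul a)
  exact (hdiff.log hd).sub (hτs.log hτ)

theorem integral_clock_eq (hT : 0 ≤ T) (hτ : ∀ s ∈ Icc 0 T, HasDerivAt τ (τ' s) s)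
    (hτ' : ContinuousOn τ' (Icc 0 T)) (hτ0 : ∀ s ∈ Icc 0 T, τ s ≠ 0)
    (hd : ∀ s ∈ Icc 0 T, τ s - a * (T - s) ≠ 0) :
    ∫ s in (0 : ℝ)..T, τ' s * (a * (T - s)) / (τ s * (τ s - a * (T - s))) =
      Real.log (τ 0) - Real.log (τ 0 - a * T) - ∫ s in (0 : ℝ)..T, a / (τ s - a * (T - s)) := by
  have hτc : ContinuousOn τ (Icc 0 T) := HasDerivAt.continuousOn hτ
  have hdc : ContinuousOn (fun s => τ s - a * (T - s)) (Icc 0 T) := hτc.sub (by fun_prop)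
  have hF' : IntervalIntegrable (fun s => (τ' s + a) / (τ s - a * (T - s)) - τ' s / τ s)
      MeasureTheory.volume 0 T :=
    (((hτ'.add continuousOn_const).div hdc hd).sub (hτ'.div hτc hτ0)).intervalIntegrable_of_Icc hT
  have hg : IntervalIntegrable (fun s => a / (τ s - a * (T - s))) MeasureTheory.volume 0 T :=
    (continuousOn_const.div hdc hd).intervalIntegrable_of_Icc hT
  have hIcc {s : ℝ} (hs : s ∈ uIcc 0 T) : s ∈ Icc 0 T := uIcc_of_le hT ▸ hs
  rw [intervalIntegral.integral_congr fun s hs =>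
      clock_integrand_eq_partial_fractions (τ' := τ') (hτ0 s (hIcc hs)) (hd s (hIcc hs)),
    intervalIntegral.integral_sub hF' hg,
    intervalIntegral.integral_eq_sub_of_hasDerivAt (fun s hs =>
      hasDerivAt_log_clock_sub_log (hτ s (hIcc hs)) (hτ0 s (hIcc hs)) (hd s (hIcc hs))) hF']
  simp only [sub_self, mul_zero, sub_zero]
  ring

end Clock

theorem stmt6_general (T t₀ γ : ℝ) (hT : 0 < T) (hγ0 : 0 < γ) (hγ1 : γ < 1)
    (hcond : (1 - γ) / γ < t₀ / T)
    (τ₁ τ₁' τ₂ τ₂' : ℝ → ℝ)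
    (h₁diff : ∀ t ∈ Set.Icc (0 : ℝ) T, HasDerivAt τ₁ (τ₁' t) t)
    (h₂diff : ∀ t ∈ Set.Icc (0 : ℝ) T, HasDerivAt τ₂ (τ₂' t) t)
    (h₁cont : ContinuousOn τ₁' (Set.Icc 0 T))
    (h₂cont : ContinuousOn τ₂' (Set.Icc 0 T))
    (h₁0 : τ₁ 0 = t₀) (h₂0 : τ₂ 0 = t₀)
    (h₂' : ∀ t ∈ Set.Icc (0 : ℝ) T, 1 ≤ τ₂' t)
    (hle : ∀ t ∈ Set.Icc (0 : ℝ) T, τ₂ t ≤ τ₁ t) :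
    (1 / (2 * γ)) * ∫ s in (0 : ℝ)..T,
        τ₂' s * (((1 - γ) / γ) * (T - s)) / (τ₂ s * (τ₂ s - ((1 - γ) / γ) * (T - s))) ≤
      (1 / (2 * γ)) * ∫ s in (0 : ℝ)..T,
        τ₁' s * (((1 - γ) / γ) * (T - s)) / (τ₁ s * (τ₁ s - ((1 - γ) / γ) * (T - s))) := by
  set a := (1 - γ) / γ
  have ha : 0 ≤ a := div_nonneg (by linarith) hγ0.le
  have haT : a * T < t₀ := (lt_div_iff₀ hT).mp hcond
  have h0 : (0 : ℝ) ∈ Icc 0 T := left_mem_Icc.mpr hT.le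
  have hd₂ : ∀ s ∈ Icc 0 T, 0 < τ₂ s - a * (T - s) := fun s hs => by
    have := (convex_Icc 0 T).sub_le_image_sub_of_one_le_hasDerivAt h₂diff h₂' h0 hs hs.1
    nlinarith [hs.1, hs.2]
  have hd₁ : ∀ s ∈ Icc 0 T, 0 < τ₁ s - a * (T - s) := fun s hs => by linarith [hd₂ s hs, hle s hs]
  have hτ_ne {τ : ℝ → ℝ} (hd : ∀ s ∈ Icc 0 T, 0 < τ s - a * (T - s)) (s) (hs : s ∈ Icc 0 T) :
      τ s ≠ 0 := by nlinarith [hd s hs, hs.2]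
  rw [integral_clock_eq hT.le h₁diff h₁cont (hτ_ne hd₁) fun s hs => (hd₁ s hs).ne',
    integral_clock_eq hT.le h₂diff h₂cont (hτ_ne hd₂) fun s hs => (hd₂ s hs).ne', h₁0, h₂0]
  gcongr 1 / (2 * γ) * (_ - ?_)
  exact integral_const_div_le_integral_const_div hT.le ha
    ((HasDerivAt.continuousOn h₁diff).sub (by fun_prop))
    ((HasDerivAt.continuousOn h₂diff).sub (by fun_prop)) hd₂ fun s hs => by linarith [hle s hs]

/-- Monotonicity of the CRRA (`0 < γ < 1`) value-function constant term in the
informative clock: if `τ¹ ≥ τ²` pointwise then `c(τ¹) ≥ c(τ²)`. -/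
theorem stmt6 (T t₀ γ : ℝ) (hT : 0 < T) (ht₀ : 0 < t₀) (hγ0 : 0 < γ) (hγ1 : γ < 1)
    (hcond : (1 - γ) / γ < t₀ / T)
    (τ₁ τ₁' τ₂ τ₂' : ℝ → ℝ)
    (h₁diff : ∀ t ∈ Set.Icc (0 : ℝ) T, HasDerivAt τ₁ (τ₁' t) t)
    (h₂diff : ∀ t ∈ Set.Icc (0 : ℝ) T, HasDerivAt τ₂ (τ₂' t) t)
    (h₁cont : ContinuousOn τ₁' (Set.Icc 0 T))
    (h₂cont : ContinuousOn τ₂' (Set.Icc 0 T))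
    (h₁0 : τ₁ 0 = t₀) (h₂0 : τ₂ 0 = t₀)
    (h₁' : ∀ t ∈ Set.Icc (0 : ℝ) T, 1 ≤ τ₁' t)
    (h₂' : ∀ t ∈ Set.Icc (0 : ℝ) T, 1 ≤ τ₂' t)
    (hle : ∀ t ∈ Set.Icc (0 : ℝ) T, τ₂ t ≤ τ₁ t) :
    (1 / (2 * γ)) * ∫ s in (0 : ℝ)..T,
        τ₂' s * (((1 - γ) / γ) * (T - s)) / (τ₂ s * (τ₂ s - ((1 - γ) / γ) * (T - s))) ≤
      (1 / (2 * γ)) * ∫ s in (0 : ℝ)..T,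
        τ₁' s * (((1 - γ) / γ) * (T - s)) / (τ₁ s * (τ₁ s - ((1 - γ) / γ) * (T - s))) :=
  stmt6_general T t₀ γ hT hγ0 hγ1 hcond τ₁ τ₁' τ₂ τ₂' h₁diff h₂diff h₁cont h₂cont h₁0 h₂0 h₂' hle
end

section
/- Let T > 0, t₀ > 0, γ > 1, and let τ¹, τ² : [0,T] → ℝ be continuously differentiable with τⁱ(0) = t₀, (τⁱ)'(t) ≥ 1, and τ¹(t) ≥ τ²(t) for all t. Define c(τ) := (1/(2γ)) ∫₀ᵀ τ'(s)·((1−γ)/γ)(T−s) / (τ(s)·(τ(s) − ((1−γ)/γ)(T−s))) ds. Then c(τ¹) ≤ c(τ²), and since the CRRA utility x^{1−γ}/(1−γ) is negative for γ > 1, the value V = U(e^{rT}x₀)·exp(γ·(a(0)(μ₀−r)²/2 + c(τ))) still satisfies V(τ¹) ≥ V(τ²). -/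
/-!
Write `k s = ((1 - γ) / γ) (T - s) ≤ 0`. The integrand `τ' k / (τ (τ - k))` equals
`d/ds [log (τ - k) - log τ] + k' / (τ - k)`. Since `k T = 0` and `τ 0 = t₀`, the boundary
term is the same for every clock, while the remaining integral of `k' / (τ - k)`, with
`k' = (γ - 1) / γ ≥ 0`, decreases when `τ` increases. Hence `c(τ¹) ≤ c(τ²)`, and the value
inequality flips because the CRRA utility is negative for `γ > 1`.
-/

open Set Real intervalIntegral

theorem monotoneOn_Icc_of_hasDerivAt_nonneg {f f' : ℝ → ℝ} {a b : ℝ}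
    (hf : ∀ t ∈ Icc a b, HasDerivAt f (f' t) t) (hf' : ∀ t ∈ Icc a b, 0 ≤ f' t) :
    MonotoneOn f (Icc a b) :=
  monotoneOn_of_hasDerivWithinAt_nonneg (convex_Icc a b) (HasDerivAt.continuousOn hf)
    (fun t ht => (hf t (interior_subset ht)).hasDerivWithinAt)
    (fun t ht => hf' t (interior_subset ht))

section ClockIntegral

variable {τ τ' k k' : ℝ → ℝ} {a b : ℝ}

theorem integral_mul_div_mul_sub_eq (hab : a ≤ b)
    (hτ : ∀ t ∈ Icc a b, HasDerivAt τ (τ' t) t) (hk : ∀ t ∈ Icc a b, HasDerivAt k (k' t) t)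
    (hτ' : ContinuousOn τ' (Icc a b)) (hk' : ContinuousOn k' (Icc a b))
    (hτ0 : ∀ t ∈ Icc a b, τ t ≠ 0) (hτk0 : ∀ t ∈ Icc a b, τ t - k t ≠ 0) :
    ∫ s in a..b, τ' s * k s / (τ s * (τ s - k s)) =
      (log (τ b - k b) - log (τ b)) - (log (τ a - k a) - log (τ a)) +
        ∫ s in a..b, k' s / (τ s - k s) := by
  have hτc := HasDerivAt.continuousOn hτ
  have hkc := HasDerivAt.continuousOn hk
  have hF : ∀ t ∈ uIcc a b, HasDerivAt (fun s => log (τ s - k s) - log (τ s))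
      (τ' t * k t / (τ t * (τ t - k t)) - k' t / (τ t - k t)) t := by
    intro t ht
    rw [uIcc_of_le hab] at ht
    refine (((hτ t ht).fun_sub (hk t ht)).log (hτk0 t ht)).fun_sub
      ((hτ t ht).log (hτ0 t ht)) |>.congr_deriv ?_
    field_simp [hτ0 t ht, hτk0 t ht]
    ring
  have hrest : IntervalIntegrable (fun s => k' s / (τ s - k s)) MeasureTheory.volume a b :=
    (hk'.div (hτc.sub hkc) hτk0).intervalIntegrable_of_Icc hab
  have hmain : IntervalIntegrable (fun s => τ' s * k s / (τ s * (τ s - k s)))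
      MeasureTheory.volume a b :=
    ((hτ'.mul hkc).div (hτc.mul (hτc.sub hkc)) fun t ht =>
      mul_ne_zero (hτ0 t ht) (hτk0 t ht)).intervalIntegrable_of_Icc hab
  rw [← integral_eq_sub_of_hasDerivAt hF (hmain.sub hrest), integral_sub hmain hrest]
  ring

theorem integral_mul_div_mul_sub_le {τ₁ τ₁' τ₂ τ₂' : ℝ → ℝ} (hab : a ≤ b)
    (hτ₁ : ∀ t ∈ Icc a b, HasDerivAt τ₁ (τ₁' t) t)
    (hτ₂ : ∀ t ∈ Icc a b, HasDerivAt τ₂ (τ₂' t) t)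
    (hk : ∀ t ∈ Icc a b, HasDerivAt k (k' t) t)
    (hτ₁' : ContinuousOn τ₁' (Icc a b)) (hτ₂' : ContinuousOn τ₂' (Icc a b))
    (hk' : ContinuousOn k' (Icc a b)) (hk'0 : ∀ t ∈ Icc a b, 0 ≤ k' t) (hkb : k b = 0)
    (ha : τ₁ a = τ₂ a) (hle : ∀ t ∈ Icc a b, τ₂ t ≤ τ₁ t)
    (hτ₂0 : ∀ t ∈ Icc a b, 0 < τ₂ t) (hτ₂k : ∀ t ∈ Icc a b, 0 < τ₂ t - k t) :
    ∫ s in a..b, τ₁' s * k s / (τ₁ s * (τ₁ s - k s)) ≤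
      ∫ s in a..b, τ₂' s * k s / (τ₂ s * (τ₂ s - k s)) := by
  have hτ₁0 : ∀ t ∈ Icc a b, 0 < τ₁ t := fun t ht => (hτ₂0 t ht).trans_le (hle t ht)
  have hτ₁k : ∀ t ∈ Icc a b, 0 < τ₁ t - k t := fun t ht =>
    (hτ₂k t ht).trans_le (sub_le_sub_right (hle t ht) _)
  rw [integral_mul_div_mul_sub_eq hab hτ₁ hk hτ₁' hk' (fun t ht => (hτ₁0 t ht).ne')
      (fun t ht => (hτ₁k t ht).ne'),
    integral_mul_div_mul_sub_eq hab hτ₂ hk hτ₂' hk' (fun t ht => (hτ₂0 t ht).ne')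
      (fun t ht => (hτ₂k t ht).ne')]
  simp only [hkb, ha, sub_zero, sub_self]
  have hkc := HasDerivAt.continuousOn hk
  have hint : ∀ {σ σ' : ℝ → ℝ}, (∀ t ∈ Icc a b, HasDerivAt σ (σ' t) t) →
      (∀ t ∈ Icc a b, 0 < σ t - k t) →
      IntervalIntegrable (fun s => k' s / (σ s - k s)) MeasureTheory.volume a b :=
    fun hσ hσk => (hk'.div ((HasDerivAt.continuousOn hσ).sub hkc) fun t ht =>
      (hσk t ht).ne').intervalIntegrable_of_Icc hab
  gcongr
  exact integral_mono_on hab (hint hτ₁ hτ₁k) (hint hτ₂ hτ₂k) fun t ht =>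
    div_le_div_of_nonneg_left (hk'0 t ht) (hτ₂k t ht) (sub_le_sub_right (hle t ht) _)

end ClockIntegral

theorem stmt7_general (T t₀ γ r μ₀ x₀ : ℝ) (hT : 0 < T) (ht₀ : 0 < t₀) (hγ : 1 < γ)
    (hx₀ : 0 < x₀)
    (τ₁ τ₁' τ₂ τ₂' : ℝ → ℝ)
    (h₁diff : ∀ t ∈ Set.Icc (0 : ℝ) T, HasDerivAt τ₁ (τ₁' t) t)
    (h₂diff : ∀ t ∈ Set.Icc (0 : ℝ) T, HasDerivAt τ₂ (τ₂' t) t)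
    (h₁cont : ContinuousOn τ₁' (Set.Icc 0 T))
    (h₂cont : ContinuousOn τ₂' (Set.Icc 0 T))
    (h₁0 : τ₁ 0 = t₀) (h₂0 : τ₂ 0 = t₀)
    (h₂' : ∀ t ∈ Set.Icc (0 : ℝ) T, 1 ≤ τ₂' t)
    (hle : ∀ t ∈ Set.Icc (0 : ℝ) T, τ₂ t ≤ τ₁ t)
    (c₁ c₂ a₀ : ℝ)
    (hc₁ : c₁ = (1 / (2 * γ)) * ∫ s in (0 : ℝ)..T,
        τ₁' s * (((1 - γ) / γ) * (T - s)) / (τ₁ s * (τ₁ s - ((1 - γ) / γ) * (T - s))))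
    (hc₂ : c₂ = (1 / (2 * γ)) * ∫ s in (0 : ℝ)..T,
        τ₂' s * (((1 - γ) / γ) * (T - s)) / (τ₂ s * (τ₂ s - ((1 - γ) / γ) * (T - s))))
    (U : ℝ → ℝ) (hU : U = fun x : ℝ => x ^ (1 - γ) / (1 - γ)) :
    c₁ ≤ c₂ ∧
      U (Real.exp (r * T) * x₀) * Real.exp (γ * (a₀ * (μ₀ - r) ^ 2 / 2 + c₂)) ≤
        U (Real.exp (r * T) * x₀) * Real.exp (γ * (a₀ * (μ₀ - r) ^ 2 / 2 + c₁)) := by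
  have hγ0 : 0 < γ := by linarith
  have hk : ∀ t, HasDerivAt (fun s => (1 - γ) / γ * (T - s)) ((γ - 1) / γ) t := fun t => by
    refine (((hasDerivAt_id t).const_sub T).const_mul ((1 - γ) / γ)).congr_deriv ?_
    field_simp
    ring
  have hk_nonpos : ∀ t ∈ Icc 0 T, (1 - γ) / γ * (T - t) ≤ 0 := fun t ht =>
    mul_nonpos_of_nonpos_of_nonneg (div_nonpos_of_nonpos_of_nonneg (by linarith) hγ0.le)
      (by linarith [ht.2])
  have hτ₂_ge : ∀ t ∈ Icc 0 T, t₀ ≤ τ₂ t := fun t ht =>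
    h₂0 ▸ monotoneOn_Icc_of_hasDerivAt_nonneg h₂diff (fun s hs => by linarith [h₂' s hs])
      (left_mem_Icc.2 hT.le) ht ht.1
  have hc : c₁ ≤ c₂ := by
    rw [hc₁, hc₂]
    gcongr
    exact integral_mul_div_mul_sub_le hT.le h₁diff h₂diff (fun t _ => hk t) h₁cont h₂cont
      continuousOn_const (fun _ _ => div_nonneg (by linarith) hγ0.le) (by simp)
      (h₁0.trans h₂0.symm) hle (fun t ht => ht₀.trans_le (hτ₂_ge t ht))
      (fun t ht => by linarith [hτ₂_ge t ht, hk_nonpos t ht])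
  have hU_nonpos : U (exp (r * T) * x₀) ≤ 0 := by
    rw [hU]
    exact div_nonpos_of_nonneg_of_nonpos (rpow_nonneg (by positivity) _) (by linarith)
  exact ⟨hc, mul_le_mul_of_nonpos_left (by gcongr) hU_nonpos⟩

/-- For `γ > 1`, a larger informative clock gives a smaller constant `c`, but (since the
CRRA utility is negative) a larger value function `V = U(e^{rT}x₀)·exp(γ(a(0)(μ₀−r)²/2 + c))`. -/
theorem stmt7 (T t₀ γ σ r μ₀ x₀ : ℝ) (hT : 0 < T) (ht₀ : 0 < t₀) (hγ : 1 < γ)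
    (hσ : 0 < σ) (hx₀ : 0 < x₀)
    (τ₁ τ₁' τ₂ τ₂' : ℝ → ℝ)
    (h₁diff : ∀ t ∈ Set.Icc (0 : ℝ) T, HasDerivAt τ₁ (τ₁' t) t)
    (h₂diff : ∀ t ∈ Set.Icc (0 : ℝ) T, HasDerivAt τ₂ (τ₂' t) t)
    (h₁cont : ContinuousOn τ₁' (Set.Icc 0 T))
    (h₂cont : ContinuousOn τ₂' (Set.Icc 0 T))
    (h₁0 : τ₁ 0 = t₀) (h₂0 : τ₂ 0 = t₀)
    (h₁' : ∀ t ∈ Set.Icc (0 : ℝ) T, 1 ≤ τ₁' t)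
    (h₂' : ∀ t ∈ Set.Icc (0 : ℝ) T, 1 ≤ τ₂' t)
    (hle : ∀ t ∈ Set.Icc (0 : ℝ) T, τ₂ t ≤ τ₁ t)
    (c₁ c₂ a₀ : ℝ)
    (hc₁ : c₁ = (1 / (2 * γ)) * ∫ s in (0 : ℝ)..T,
        τ₁' s * (((1 - γ) / γ) * (T - s)) / (τ₁ s * (τ₁ s - ((1 - γ) / γ) * (T - s))))
    (hc₂ : c₂ = (1 / (2 * γ)) * ∫ s in (0 : ℝ)..T,
        τ₂' s * (((1 - γ) / γ) * (T - s)) / (τ₂ s * (τ₂ s - ((1 - γ) / γ) * (T - s))))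
    (ha₀ : a₀ = (1 / (γ * σ ^ 2)) * (t₀ * (((1 - γ) / γ) * T) / (t₀ - ((1 - γ) / γ) * T)))
    (U : ℝ → ℝ) (hU : U = fun x : ℝ => x ^ (1 - γ) / (1 - γ)) :
    c₁ ≤ c₂ ∧
      U (Real.exp (r * T) * x₀) * Real.exp (γ * (a₀ * (μ₀ - r) ^ 2 / 2 + c₂)) ≤
        U (Real.exp (r * T) * x₀) * Real.exp (γ * (a₀ * (μ₀ - r) ^ 2 / 2 + c₁)) :=
  stmt7_general T t₀ γ r μ₀ x₀ hT ht₀ hγ hx₀ τ₁ τ₁' τ₂ τ₂' h₁diff h₂diff h₁cont h₂cont h₁0 h₂0 h₂'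
    hle c₁ c₂ a₀ hc₁ hc₂ U hU
end

section
/- Let β > 0, T > 0, t₀ > 0. Then ∫₀ᵀ (1/(2β)) · (T−s)·n / ((t₀+ns)(t₀+ns+T−s)) ds → (1/(2β))·ln((t₀+T)/t₀) as n → ∞, i.e., the CARA value-function constant c(0) with linear informative clock τₙ(t) = t₀ + n t converges to (1/(2β))·ln((t₀+T)/t₀). -/
/-!
Partial fractions split the integrand into `n / (t₀ + n s) - n / (t₀ + T + (n - 1) s)`, whose
integral is `log ((t₀ + T) / t₀) - log ((t₀ + n T) / (t₀ + T)) / (n - 1)` in closed form; the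
correction term vanishes as `n → ∞` because `log` grows sublinearly.
-/

open Filter Real Topology intervalIntegral Set
open scoped Interval

theorem integral_inv_mul_add {c d T : ℝ} (hc : c ≠ 0) (hd : 0 < d) (hcd : 0 < c * T + d) :
    ∫ s in (0 : ℝ)..T, (c * s + d)⁻¹ = c⁻¹ * log ((c * T + d) / d) := by
  rw [integral_comp_mul_add (fun x => x⁻¹) hc, mul_zero, zero_add, integral_inv_of_pos hd hcd,
    smul_eq_mul]

theorem tendsto_log_mul_add_div_sub_atTop {p : ℝ} (hp : 0 < p) (q r : ℝ) :
    Tendsto (fun x => log (p * x + q) / (x - r)) atTop (𝓝 0) := by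
  have hlin : Tendsto (fun x => p * x + q) atTop atTop :=
    tendsto_atTop_add_const_right _ q (tendsto_id.const_mul_atTop hp)
  refine ((tendsto_pow_log_div_mul_add_atTop p⁻¹ (-(q / p) - r) 1 (inv_ne_zero hp.ne')).comp
    hlin).congr fun x => ?_
  simp only [Function.comp_apply, pow_one]
  congr 1
  field_simp
  ring

theorem integral_linear_clock_eq {T t₀ n : ℝ} (hT : 0 < T) (ht₀ : 0 < t₀) (hn : 1 < n) :
    ∫ s in (0 : ℝ)..T, (T - s) * n / ((t₀ + n * s) * (t₀ + n * s + T - s)) =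
      log ((t₀ + T) / t₀) - log ((t₀ + n * T) / (t₀ + T)) / (n - 1) := by
  have hpos : ∀ s ∈ [[0, T]], 0 < n * s + t₀ ∧ 0 < (n - 1) * s + (t₀ + T) := by
    intro s hs
    rw [uIcc_of_le hT.le] at hs
    constructor <;> nlinarith [hs.1, hs.2]
  have hsplit : EqOn (fun s => (T - s) * n / ((t₀ + n * s) * (t₀ + n * s + T - s)))
      (fun s => n * (n * s + t₀)⁻¹ - n * ((n - 1) * s + (t₀ + T))⁻¹) [[0, T]] := by
    intro s hs
    have h₁ := (hpos s hs).1.ne'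
    have h₂ := (hpos s hs).2.ne'
    dsimp only
    rw [show t₀ + n * s + T - s = (n - 1) * s + (t₀ + T) by ring, add_comm t₀ (n * s),
      ← div_eq_mul_inv, ← div_eq_mul_inv, div_sub_div _ _ h₁ h₂]
    ring
  have hint₁ : IntervalIntegrable (fun s => (n * s + t₀)⁻¹) MeasureTheory.volume 0 T :=
    intervalIntegrable_inv (fun s hs => (hpos s hs).1.ne') (by fun_prop)
  have hint₂ : IntervalIntegrable (fun s => ((n - 1) * s + (t₀ + T))⁻¹) MeasureTheory.volume 0 T :=
    intervalIntegrable_inv (fun s hs => (hpos s hs).2.ne') (by fun_prop)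
  have hT' := hpos T right_mem_uIcc
  rw [integral_congr hsplit, integral_sub (hint₁.const_mul n) (hint₂.const_mul n),
    integral_const_mul, integral_const_mul, integral_inv_mul_add (by positivity) ht₀ hT'.1,
    integral_inv_mul_add (by linarith) (by positivity) hT'.2]
  have hX : (n - 1) * T + (t₀ + T) = t₀ + n * T := by ring
  have hX' : n * T + t₀ = t₀ + n * T := by ring
  rw [hX, hX'] at hT'
  have hn₁ : n - 1 ≠ 0 := by linarith
  rw [hX, hX', log_div hT'.1.ne' ht₀.ne', log_div hT'.1.ne' (by positivity),
    log_div (by positivity) ht₀.ne']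
  field_simp
  ring

theorem stmt9_general (β T t₀ : ℝ) (hT : 0 < T) (ht₀ : 0 < t₀) :
    Filter.Tendsto
      (fun n : ℝ => ∫ s in (0 : ℝ)..T,
        (1 / (2 * β)) * ((T - s) * n / ((t₀ + n * s) * (t₀ + n * s + T - s))))
      Filter.atTop (nhds ((1 / (2 * β)) * Real.log ((t₀ + T) / t₀))) := by
  have hcorr : Tendsto (fun n => log ((t₀ + n * T) / (t₀ + T)) / (n - 1)) atTop (𝓝 0) := by
    refine (tendsto_log_mul_add_div_sub_atTop (div_pos hT (add_pos ht₀ hT)) (t₀ / (t₀ + T))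
      1).congr fun n => ?_
    rw [div_mul_eq_mul_div, ← add_div, add_comm (T * n), mul_comm T]
  have hlim := (tendsto_const_nhds (x := log ((t₀ + T) / t₀))).sub hcorr
  rw [sub_zero] at hlim
  refine (hlim.const_mul (1 / (2 * β))).congr' ?_
  filter_upwards [eventually_gt_atTop 1] with n hn
  rw [integral_const_mul, integral_linear_clock_eq hT ht₀ hn]

/-- With linear informative clock `τₙ(t) = t₀ + n t`, the CARA constant `c(0)` converges, as
`n → ∞`, to its insider-information bound `(1/(2β))·log((t₀+T)/t₀)`. -/
theorem stmt9 (β T t₀ : ℝ) (hβ : 0 < β) (hT : 0 < T) (ht₀ : 0 < t₀) :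
    Filter.Tendsto
      (fun n : ℝ => ∫ s in (0 : ℝ)..T,
        (1 / (2 * β)) * ((T - s) * n / ((t₀ + n * s) * (t₀ + n * s + T - s))))
      Filter.atTop (nhds ((1 / (2 * β)) * Real.log ((t₀ + T) / t₀))) :=
  stmt9_general β T t₀ hT ht₀
end

section
/- Let γ ∈ (0,1), T > 0, t₀ > 0 with t₀/T > (1−γ)/γ, and k := (1−γ)/γ. For any continuously differentiable τ : [0,T] → ℝ with τ(0) = t₀ and τ'(t) ≥ 1, it holds that (1/(2γ)) ∫₀ᵀ τ'(s)·k(T−s) / (τ(s)(τ(s) − k(T−s))) ds ≤ (1/(2γ))·ln(t₀/(t₀ − kT)). -/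
/-!
Write `g s = τ s - k (T - s)`. The integrand equals `τ'/g - τ'/τ`, and since `g' = τ' + k ≥ τ'`
it is bounded by the logarithmic derivative of `g / τ`. Integrating, the left side is at most
`log (g T / τ T) - log (g 0 / τ 0) = log (t₀ / (t₀ - k T))`, because `g T = τ T`.
`g` (hence `τ`) is positive on `[0, T]` because `τ s ≥ t₀ + s` and `t₀ > k T`.
-/

open Set intervalIntegral MeasureTheory

section

variable {f f' : ℝ → ℝ} {a b : ℝ}

lemma add_mul_sub_le_of_le_hasDerivAt {C : ℝ} (hf : ∀ x ∈ Icc a b, HasDerivAt f (f' x) x)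
    (hC : ∀ x ∈ Icc a b, C ≤ f' x) {x : ℝ} (hx : x ∈ Icc a b) : f a + C * (x - a) ≤ f x := by
  have hf_int : ∀ y ∈ interior (Icc a b), HasDerivAt f (f' y) y := fun y hy =>
    hf y (interior_subset hy)
  have := (convex_Icc a b).mul_sub_le_image_sub_of_le_deriv
    (fun y hy => (hf y hy).continuousAt.continuousWithinAt)
    (fun y hy => (hf_int y hy).differentiableAt.differentiableWithinAt)
    (fun y hy => (hf_int y hy).deriv ▸ hC y (interior_subset hy))
    a (left_mem_Icc.2 (hx.1.trans hx.2)) x hx hx.1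
  linarith

lemma integral_deriv_div_eq_log_sub (hf : ∀ x ∈ uIcc a b, HasDerivAt f (f' x) x)
    (hf' : ContinuousOn f' (uIcc a b)) (hf0 : ∀ x ∈ uIcc a b, f x ≠ 0) :
    ∫ x in a..b, f' x / f x = Real.log (f b) - Real.log (f a) :=
  integral_eq_sub_of_hasDerivAt (fun x hx => (hf x hx).log (hf0 x hx))
    (hf'.div (fun x hx => (hf x hx).continuousAt.continuousWithinAt) hf0).intervalIntegrable

end

lemma mul_div_mul_sub_eq_div_sub_div {x c y : ℝ} (hx : x ≠ 0) (hxc : x - c ≠ 0) :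
    y * c / (x * (x - c)) = y / (x - c) - y / x := by
  field_simp
  ring

lemma integral_deriv_mul_div_mul_sub_le_log_div {τ τ' : ℝ → ℝ} {k T : ℝ} (hk : 0 ≤ k)
    (hT : 0 ≤ T) (hτ : ∀ s ∈ Icc 0 T, HasDerivAt τ (τ' s) s) (hτ' : ContinuousOn τ' (Icc 0 T))
    (hg_pos : ∀ s ∈ Icc 0 T, 0 < τ s - k * (T - s)) :
    ∫ s in (0 : ℝ)..T, τ' s * (k * (T - s)) / (τ s * (τ s - k * (T - s))) ≤
      Real.log (τ 0 / (τ 0 - k * T)) := by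
  have hτ_pos : ∀ s ∈ Icc 0 T, 0 < τ s := fun s hs => by
    linarith [hg_pos s hs, mul_nonneg hk (sub_nonneg.2 hs.2)]
  set g : ℝ → ℝ := fun s => τ s - k * (T - s) with hg_def
  have hg : ∀ s ∈ Icc 0 T, HasDerivAt g (τ' s + k) s := fun s hs => by
    have := (hτ s hs).sub (((hasDerivAt_id' s).const_sub T).const_mul k)
    rwa [mul_neg, mul_one, sub_neg_eq_add] at this
  have hg' : ContinuousOn (fun s => τ' s + k) (Icc 0 T) := hτ'.add continuousOn_const
  have hτ_cont : ContinuousOn τ (Icc 0 T) := fun s hs => (hτ s hs).continuousAt.continuousWithinAt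
  have hg_cont : ContinuousOn g (Icc 0 T) := fun s hs => (hg s hs).continuousAt.continuousWithinAt
  have hτ'_div_τ : IntervalIntegrable (fun s => τ' s / τ s) volume 0 T :=
    (hτ'.div hτ_cont fun s hs => (hτ_pos s hs).ne').intervalIntegrable_of_Icc hT
  have hτ'_div_g : IntervalIntegrable (fun s => τ' s / g s) volume 0 T :=
    (hτ'.div hg_cont fun s hs => (hg_pos s hs).ne').intervalIntegrable_of_Icc hT
  have hg'_div_g : IntervalIntegrable (fun s => (τ' s + k) / g s) volume 0 T :=
    (hg'.div hg_cont fun s hs => (hg_pos s hs).ne').intervalIntegrable_of_Icc hT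
  have hI : uIcc 0 T = Icc 0 T := uIcc_of_le hT
  calc _ = ∫ s in (0 : ℝ)..T, (τ' s / g s - τ' s / τ s) := integral_congr fun s hs =>
          mul_div_mul_sub_eq_div_sub_div (hτ_pos s (hI ▸ hs)).ne' (hg_pos s (hI ▸ hs)).ne'
    _ ≤ ∫ s in (0 : ℝ)..T, ((τ' s + k) / g s - τ' s / τ s) := by
          rw [integral_sub hτ'_div_g hτ'_div_τ, integral_sub hg'_div_g hτ'_div_τ]
          gcongr
          exact integral_mono_on hT hτ'_div_g hg'_div_g fun s hs =>
            div_le_div_of_nonneg_right (by linarith) (hg_pos s hs).le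
    _ = (Real.log (g T) - Real.log (g 0)) - (Real.log (τ T) - Real.log (τ 0)) := by
          rw [integral_sub hg'_div_g hτ'_div_τ,
            integral_deriv_div_eq_log_sub (hI ▸ hg) (hI ▸ hg')
              (hI ▸ fun s hs => (hg_pos s hs).ne'),
            integral_deriv_div_eq_log_sub (hI ▸ hτ) (hI ▸ hτ')
              (hI ▸ fun s hs => (hτ_pos s hs).ne')]
    _ = Real.log (τ 0 / (τ 0 - k * T)) := by
          have hg0 := hg_pos 0 (left_mem_Icc.2 hT)
          simp only [hg_def, sub_self, mul_zero, sub_zero] at hg0 ⊢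
          rw [Real.log_div (hτ_pos 0 (left_mem_Icc.2 hT)).ne' hg0.ne']
          ring

theorem stmt11_general (γ T t₀ : ℝ) (hγ0 : 0 < γ) (hγ1 : γ < 1) (hT : 0 < T)
    (hcond : (1 - γ) / γ < t₀ / T)
    (k : ℝ) (hk : k = (1 - γ) / γ)
    (τ τ' : ℝ → ℝ)
    (hτdiff : ∀ s ∈ Set.Icc (0 : ℝ) T, HasDerivAt τ (τ' s) s)
    (hτ'cont : ContinuousOn τ' (Set.Icc 0 T))
    (hτ0 : τ 0 = t₀)
    (hτ' : ∀ s ∈ Set.Icc (0 : ℝ) T, 1 ≤ τ' s) :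
    (1 / (2 * γ)) * ∫ s in (0 : ℝ)..T,
        τ' s * (k * (T - s)) / (τ s * (τ s - k * (T - s))) ≤
      (1 / (2 * γ)) * Real.log (t₀ / (t₀ - k * T)) := by
  have hk0 : 0 < k := hk ▸ div_pos (by linarith) hγ0
  have hkT : k * T < t₀ := hk ▸ (lt_div_iff₀ hT).mp hcond
  have hτ_ge : ∀ s ∈ Icc 0 T, t₀ + s ≤ τ s := fun s hs => by
    simpa [hτ0] using add_mul_sub_le_of_le_hasDerivAt hτdiff hτ' hs
  have hg_pos : ∀ s ∈ Icc 0 T, 0 < τ s - k * (T - s) := fun s hs => by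
    nlinarith [hτ_ge s hs, hs.1]
  have hmain := integral_deriv_mul_div_mul_sub_le_log_div hk0.le hT.le hτdiff hτ'cont hg_pos
  rw [hτ0] at hmain
  exact mul_le_mul_of_nonneg_left hmain (by positivity)

/-- Maximal value of extra information in the CRRA case with `0 < γ < 1`:
with `k = (1−γ)/γ` and `t₀/T > k`, for any informative clock `τ` with `τ(0) = t₀`, `τ' ≥ 1`,
`(1/(2γ))∫₀ᵀ τ'(s)k(T−s)/(τ(s)(τ(s)−k(T−s))) ds ≤ (1/(2γ))·log(t₀/(t₀−kT))`. -/
theorem stmt11 (γ T t₀ : ℝ) (hγ0 : 0 < γ) (hγ1 : γ < 1) (hT : 0 < T) (ht₀ : 0 < t₀)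
    (hcond : (1 - γ) / γ < t₀ / T)
    (k : ℝ) (hk : k = (1 - γ) / γ)
    (τ τ' : ℝ → ℝ)
    (hτdiff : ∀ s ∈ Set.Icc (0 : ℝ) T, HasDerivAt τ (τ' s) s)
    (hτ'cont : ContinuousOn τ' (Set.Icc 0 T))
    (hτ0 : τ 0 = t₀)
    (hτ' : ∀ s ∈ Set.Icc (0 : ℝ) T, 1 ≤ τ' s) :
    (1 / (2 * γ)) * ∫ s in (0 : ℝ)..T,
        τ' s * (k * (T - s)) / (τ s * (τ s - k * (T - s))) ≤
      (1 / (2 * γ)) * Real.log (t₀ / (t₀ - k * T)) :=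
  stmt11_general γ T t₀ hγ0 hγ1 hT hcond k hk τ τ' hτdiff hτ'cont hτ0 hτ'
end

section
/- Let β > 0, λ > 0, T > 0, and define the Lagrangian L(t, p, q) = (1/(2β))·(T−t)·q/(p(p+T−t)) − λ(q−1)² for p > 0, q ≥ 1. If τ : [0,T] → (0,∞) is a twice continuously differentiable extremal of the functional ∫₀ᵀ L(t, τ(t), τ'(t)) dt, i.e., satisfies the Euler–Lagrange equation d/dt[∂L/∂q (t,τ(t),τ'(t))] = ∂L/∂p (t,τ(t),τ'(t)), then τ''(t) + (1/(4βλ))·1/(τ(t)+T−t)² = 0 for all t ∈ (0,T). -/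
/-!
Since `(T - t) / (p (p + T - t)) = 1/p - 1/(p + T - t)`, the Lagrangian is
`q · G(t, p) - λ (q - 1)²` with `G = (1/(2β)) (1/p - 1/(p + T - t))`. The terms `τ' ∂ₚG` on the
two sides of the Euler–Lagrange equation cancel, leaving `∂ₜG(t, τ) = 2λ τ''`, and
`∂ₜG = -(1/(2β)) / (p + T - t)²`.
-/

open Set Filter Topology

noncomputable def clockLagrangian (β lam T t p q : ℝ) : ℝ :=
  (1 / (2 * β)) * ((T - t) * q / (p * (p + T - t))) - lam * (q - 1) ^ 2

section Lagrangian

variable {β lam T t p : ℝ}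

lemma clockLagrangian_eq (hp : p ≠ 0) (hpt : p + T - t ≠ 0) (q : ℝ) :
    clockLagrangian β lam T t p q =
      (1 / (2 * β)) * q * (p⁻¹ - (p + T - t)⁻¹) - lam * (q - 1) ^ 2 := by
  unfold clockLagrangian
  field_simp
  ring

lemma hasDerivAt_clockLagrangian_q (hp : p ≠ 0) (hpt : p + T - t ≠ 0) (q : ℝ) :
    HasDerivAt (clockLagrangian β lam T t p)
      ((1 / (2 * β)) * (p⁻¹ - (p + T - t)⁻¹) - 2 * lam * (q - 1)) q := by
  rw [show clockLagrangian β lam T t p = _ from funext (clockLagrangian_eq hp hpt)]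
  refine ((((hasDerivAt_id' q).const_mul (1 / (2 * β))).mul_const (p⁻¹ - (p + T - t)⁻¹)).sub
    ((((hasDerivAt_id' q).sub_const 1).pow 2).const_mul lam)).congr_deriv ?_
  ring

lemma hasDerivAt_clockLagrangian_p (hp : p ≠ 0) (hpt : p + T - t ≠ 0) (q : ℝ) :
    HasDerivAt (fun p => clockLagrangian β lam T t p q)
      ((1 / (2 * β)) * q * (-(p ^ 2)⁻¹ + ((p + T - t) ^ 2)⁻¹)) p := by
  have hnear : ∀ᶠ p' in 𝓝 p, p' ≠ 0 ∧ p' + T - t ≠ 0 :=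
    (continuousAt_id.eventually_ne hp).and
      (((continuousAt_id.add continuousAt_const).sub continuousAt_const).eventually_ne hpt)
  refine HasDerivAt.congr_of_eventuallyEq ?_
    (hnear.mono fun p' hp' => clockLagrangian_eq hp'.1 hp'.2 q)
  refine (((((hasDerivAt_id' p).inv hp).sub
    ((((hasDerivAt_id' p).add_const T).sub_const t).inv hpt)).const_mul
      ((1 / (2 * β)) * q)).sub_const (lam * (q - 1) ^ 2)).congr_deriv ?_
  ring

lemma hasDerivAt_clockLagrangian_q_along {τ τ' : ℝ → ℝ} {v a : ℝ}
    (hτ : HasDerivAt τ v t) (hτ' : HasDerivAt τ' a t) (hp : τ t ≠ 0)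
    (hpt : τ t + T - t ≠ 0) :
    HasDerivAt (fun s => (1 / (2 * β)) * ((τ s)⁻¹ - (τ s + T - s)⁻¹) - 2 * lam * (τ' s - 1))
      ((1 / (2 * β)) * (-v / τ t ^ 2 + (v - 1) / (τ t + T - t) ^ 2) - 2 * lam * a) t := by
  refine ((((hτ.inv hp).sub (((hτ.add_const T).sub (hasDerivAt_id' t)).inv hpt)).const_mul
    (1 / (2 * β))).sub ((hτ'.sub_const 1).const_mul (2 * lam))).congr_deriv ?_
  simp only [Pi.sub_apply]
  ring

end Lagrangian

lemma hasDerivAt_deriv_of_contDiffOn_two {𝕜 F : Type*} [NontriviallyNormedField 𝕜]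
    [NormedAddCommGroup F] [NormedSpace 𝕜 F] {f : 𝕜 → F} {s : Set 𝕜} {x : 𝕜}
    (hf : ContDiffOn 𝕜 2 f s) (hs : IsOpen s) (hx : x ∈ s) :
    HasDerivAt f (deriv f x) x ∧ HasDerivAt (deriv f) (deriv (deriv f) x) x :=
  ⟨((hf.contDiffAt (hs.mem_nhds hx)).differentiableAt (by norm_num)).hasDerivAt,
    (((hf.deriv_of_isOpen hs (m := 1) (by norm_num)).contDiffAt (hs.mem_nhds hx)).differentiableAt
      (by norm_num)).hasDerivAt⟩

theorem stmt17_general (β lam T : ℝ) (hlam : 0 < lam)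
    (L : ℝ → ℝ → ℝ → ℝ)
    (hL : L = fun t p q => (1 / (2 * β)) * ((T - t) * q / (p * (p + T - t)))
      - lam * (q - 1) ^ 2)
    (τ : ℝ → ℝ) (hτC2 : ContDiffOn ℝ 2 τ (Set.Icc 0 T))
    (hτpos : ∀ t ∈ Set.Icc (0 : ℝ) T, 0 < τ t)
    (hEL : ∀ t ∈ Set.Ioo (0 : ℝ) T,
      deriv (fun s => deriv (fun q => L s (τ s) q) (deriv τ s)) t =
        deriv (fun p => L t p (deriv τ t)) (τ t)) :
    ∀ t ∈ Set.Ioo (0 : ℝ) T,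
      deriv (deriv τ) t + (1 / (4 * β * lam)) * (1 / (τ t + T - t) ^ 2) = 0 := by
  replace hL : L = clockLagrangian β lam T := hL
  subst hL
  have hne : ∀ s ∈ Ioo (0 : ℝ) T, τ s ≠ 0 ∧ τ s + T - s ≠ 0 := fun s hs =>
    have := hτpos s (Ioo_subset_Icc_self hs)
    ⟨this.ne', by linarith [hs.2]⟩
  intro t ht
  obtain ⟨hτ, hτ'⟩ := hasDerivAt_deriv_of_contDiffOn_two
    (hτC2.mono Ioo_subset_Icc_self) isOpen_Ioo ht
  have hq_eq : (fun s => deriv (clockLagrangian β lam T s (τ s)) (deriv τ s)) =ᶠ[𝓝 t]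
      fun s => (1 / (2 * β)) * ((τ s)⁻¹ - (τ s + T - s)⁻¹) - 2 * lam * (deriv τ s - 1) :=
    eventually_of_mem (isOpen_Ioo.mem_nhds ht) fun s hs =>
      (hasDerivAt_clockLagrangian_q (hne s hs).1 (hne s hs).2 _).deriv
  have hEL_t := hEL t ht
  rw [hq_eq.deriv_eq, (hasDerivAt_clockLagrangian_q_along hτ hτ' (hne t ht).1 (hne t ht).2).deriv,
    (hasDerivAt_clockLagrangian_p (hne t ht).1 (hne t ht).2 _).deriv] at hEL_t
  have hreduced : 2 * lam * deriv (deriv τ) t = -(1 / (2 * β)) * (1 / (τ t + T - t) ^ 2) := by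
    linear_combination -hEL_t
  have hr : deriv (deriv τ) t = -(1 / (2 * β)) * (1 / (τ t + T - t) ^ 2) / (2 * lam) := by
    rw [← hreduced]
    field_simp
  rw [hr]
  ring

/-- Euler–Lagrange equation of the CARA net-value functional with quadratic cost:
any extremal informative clock satisfies `τ''(t) + (1/(4βλ))·1/(τ(t)+T−t)² = 0` on `(0,T)`. -/
theorem stmt17 (β lam T : ℝ) (hβ : 0 < β) (hlam : 0 < lam) (hT : 0 < T)
    (L : ℝ → ℝ → ℝ → ℝ)
    (hL : L = fun t p q => (1 / (2 * β)) * ((T - t) * q / (p * (p + T - t)))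
      - lam * (q - 1) ^ 2)
    (τ : ℝ → ℝ) (hτC2 : ContDiffOn ℝ 2 τ (Set.Icc 0 T))
    (hτpos : ∀ t ∈ Set.Icc (0 : ℝ) T, 0 < τ t)
    (hτ' : ∀ t ∈ Set.Icc (0 : ℝ) T, 1 ≤ deriv τ t)
    (hEL : ∀ t ∈ Set.Ioo (0 : ℝ) T,
      deriv (fun s => deriv (fun q => L s (τ s) q) (deriv τ s)) t =
        deriv (fun p => L t p (deriv τ t)) (τ t)) :
    ∀ t ∈ Set.Ioo (0 : ℝ) T,
      deriv (deriv τ) t + (1 / (4 * β * lam)) * (1 / (τ t + T - t) ^ 2) = 0 :=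
  stmt17_general β lam T hlam L hL τ hτC2 hτpos hEL
end
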